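/- arXiv:1208.4430 — 2 statements merged into one kernel-verified Lean document; each statement's English description precedes it below -/
import Mathlib

section
/- Let q be the standard nondegenerate quadratic form on ℂ^(2n), q(x) = x₁² + ⋯ + x_{2n}². Then the Clifford algebra Cl(q) is isomorphic as a ℂ-algebra to the matrix algebra of 2ⁿ × 2ⁿ complex matrices. -/
/-!
Split off two coordinates at a time: ℂ^(2n+2) = ℂ^(2n) ⊕ ℂ². In the Clifford algebra of the plane
ℂ² with orthonormal basis e, f, the element ω = i·ef is even, squares to 1 and anticommutes with
every vector. Hence v + y ↦ v ⊗ ω + 1 ⊗ y (v ∈ ℂ^(2n), y ∈ ℂ²) squares to q(v) + q(y) and induces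
Cl(ℂ^(2n) ⊕ ℂ²) ≅ Cl(ℂ^(2n)) ⊗ Cl(ℂ²), an ordinary, ungraded tensor product; the inverse sends
v ⊗ 1 to vω, which commutes with Cl(ℂ²) because v and ω both anticommute with ℂ². Since Cl(ℂ²) is
the split quaternion algebra ≅ M₂(ℂ), induction on n gives
Cl(ℂ^(2n+2)) ≅ M_{2ⁿ}(ℂ) ⊗ M₂(ℂ) ≅ M_{2ⁿ⁺¹}(ℂ).
-/

open scoped Quaternion TensorProduct

noncomputable section

namespace QuaternionAlgebra

variable {R : Type*} [CommRing R]

def splitBasis : Basis (Matrix (Fin 2) (Fin 2) R) (1 : R) 0 1 where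
  i := !![0, 1; 1, 0]
  j := !![1, 0; 0, -1]
  k := !![0, -1; 1, 0]
  i_mul_i := by ext i j; fin_cases i <;> fin_cases j <;> simp
  j_mul_j := by ext i j; fin_cases i <;> fin_cases j <;> simp
  i_mul_j := by ext i j; fin_cases i <;> fin_cases j <;> simp
  j_mul_i := by ext i j; fin_cases i <;> fin_cases j <;> simp

def splitEquivMatrix [Invertible (2 : R)] : ℍ[R,1,0,1] ≃ₐ[R] Matrix (Fin 2) (Fin 2) R :=
  AlgEquiv.ofBijective (splitBasis (R := R)).liftHom <| Function.bijective_iff_has_inverse.mpr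
    ⟨fun M => ⟨⅟2 * (M 0 0 + M 1 1), ⅟2 * (M 0 1 + M 1 0), ⅟2 * (M 0 0 - M 1 1),
      ⅟2 * (M 1 0 - M 0 1)⟩,
     fun x => by
      ext <;> simp [splitBasis, Basis.lift, Algebra.algebraMap_eq_smul_one] <;> ring_nf <;>
        simp [mul_right_comm _ _ (2 : R)],
     fun M => by
      ext i j
      fin_cases i <;> fin_cases j <;>
        simp [splitBasis, Basis.lift, Algebra.algebraMap_eq_smul_one] <;> ring_nf <;>
        simp [mul_right_comm _ _ (2 : R)]⟩

end QuaternionAlgebra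

namespace Matrix

-- `Matrix.uniqueAlgEquiv` uses the `Fintype` and `DecidableEq` instances coming from `Unique`,
-- which are not those of `Fin 1`.
def finOneAlgEquiv (R : Type*) [CommRing R] : R ≃ₐ[R] Matrix (Fin 1) (Fin 1) R :=
  AlgEquiv.ofBijective (Algebra.ofId R _)
    ⟨fun a b h => by simpa [algebraMap_matrix_apply] using congr_fun₂ h 0 0,
     fun M => ⟨M 0 0, by ext i j; fin_cases i; fin_cases j; rfl⟩⟩

end Matrix

namespace QuadraticMap

variable {R : Type*} [CommRing R]

variable (R) in
def sumSquares (k : ℕ) : QuadraticForm R (Fin k → R) :=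
  weightedSumSquares R (1 : Fin k → R)

theorem sumSquares_apply {k : ℕ} (x : Fin k → R) : sumSquares R k x = ∑ i, x i ^ 2 := by
  simp [sumSquares, weightedSumSquares_apply, pow_two]

def sumSquaresIsometryEquivProd (k : ℕ) :
    (sumSquares R (k + 2)).IsometryEquiv
      ((sumSquares R k).prod (CliffordAlgebraQuaternion.Q 1 1)) where
  toLinearEquiv := (LinearEquiv.funCongrLeft R R finSumFinEquiv).trans <|
    (LinearEquiv.sumArrowLequivProdArrow _ _ R R).trans <|
      (LinearEquiv.refl R _).prodCongr (LinearEquiv.finTwoArrow R R)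
  map_app' x := by
    simp [sumSquares_apply, Fin.sum_univ_add, pow_two]

end QuadraticMap

namespace CliffordAlgebraQuaternion

open CliffordAlgebra

variable {R : Type*} [CommRing R] {c₁ c₂ : R}

variable (c₁ c₂) in
def volume (u : R) : CliffordAlgebra (Q c₁ c₂) :=
  u • (ι (Q c₁ c₂) (1, 0) * ι (Q c₁ c₂) (0, 1))

theorem volume_mem_evenOdd_zero (u : R) : volume c₁ c₂ u ∈ evenOdd (Q c₁ c₂) 0 :=
  Submodule.smul_mem _ u (ι_mul_ι_mem_evenOdd_zero _ _ _)

theorem toQuaternion_volume (u : R) : toQuaternion (volume c₁ c₂ u) = ⟨0, 0, 0, u⟩ := by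
  ext <;> simp [volume]

theorem volume_mul_self {u : R} (hu : u * u * (c₁ * c₂) = -1) :
    volume c₁ c₂ u * volume c₁ c₂ u = 1 := by
  apply CliffordAlgebraQuaternion.equiv.injective
  simp only [CliffordAlgebraQuaternion.equiv_apply, map_mul, toQuaternion_volume, map_one]
  ext <;> simp
  linear_combination -hu

theorem volume_mul_ι (u : R) (y : R × R) :
    volume c₁ c₂ u * ι (Q c₁ c₂) y = -(ι (Q c₁ c₂) y * volume c₁ c₂ u) := by
  apply CliffordAlgebraQuaternion.equiv.injective
  simp only [CliffordAlgebraQuaternion.equiv_apply, map_mul, map_neg, toQuaternion_volume,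
    toQuaternion_ι]
  ext <;> simp <;> ring

end CliffordAlgebraQuaternion

namespace CliffordAlgebra

variable {R M M₁ M₂ : Type*} [CommRing R] [AddCommGroup M] [AddCommGroup M₁] [AddCommGroup M₂]
  [Module R M] [Module R M₁] [Module R M₂]

theorem commute_of_forall_commute_ι {Q : QuadraticForm R M} {A : Type*} [Ring A] [Algebra R A]
    (f : CliffordAlgebra Q →ₐ[R] A) {a : A} (h : ∀ m, Commute a (f (ι Q m)))
    (x : CliffordAlgebra Q) : Commute a (f x) := by
  induction x using CliffordAlgebra.induction with
  | algebraMap r => rw [AlgHom.commutes]; exact (Algebra.commutes r a).symm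
  | ι m => exact h m
  | mul x y hx hy => rw [map_mul]; exact hx.mul_right hy
  | add x y hx hy => rw [map_add]; exact hx.add_right hy

def equivOfSubsingleton [Subsingleton M] (Q : QuadraticForm R M) : CliffordAlgebra Q ≃ₐ[R] R :=
  AlgEquiv.ofAlgHom (lift Q ⟨0, fun m => by simp [Subsingleton.elim m 0]⟩) (Algebra.ofId R _)
    (by ext) (by ext m; simp [Subsingleton.elim m 0])

variable (Q₁ : QuadraticForm R M₁) {Q₂ : QuadraticForm R M₂} {ω : CliffordAlgebra Q₂}

local notation "inl" => QuadraticMap.Isometry.inl Q₁ Q₂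
local notation "inr" => QuadraticMap.Isometry.inr Q₁ Q₂

section

variable (hω_mul_self : ω * ω = 1) (hω_anticomm : ∀ y, ω * ι Q₂ y = -(ι Q₂ y * ω))

def prodToTensor :
    CliffordAlgebra (Q₁.prod Q₂) →ₐ[R] CliffordAlgebra Q₁ ⊗[R] CliffordAlgebra Q₂ :=
  lift _ ⟨LinearMap.coprod ((TensorProduct.mk R _ _).flip ω ∘ₗ ι Q₁)
    (Algebra.TensorProduct.includeRight.toLinearMap ∘ₗ ι Q₂), fun ⟨m, y⟩ => by
      simp only [LinearMap.coprod_apply, LinearMap.comp_apply, LinearMap.flip_apply,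
        TensorProduct.mk_apply, AlgHom.toLinearMap_apply, Algebra.TensorProduct.includeRight_apply,
        add_mul, mul_add, Algebra.TensorProduct.tmul_mul_tmul, one_mul, mul_one, hω_mul_self,
        hω_anticomm, TensorProduct.tmul_neg, ι_sq_scalar, QuadraticMap.prod_apply, map_add]
      rw [add_assoc, add_neg_cancel_left, Algebra.TensorProduct.algebraMap_apply,
        Algebra.TensorProduct.algebraMap_apply']⟩

theorem prodToTensor_ι (v : M₁ × M₂) :
    prodToTensor Q₁ hω_mul_self hω_anticomm (ι (Q₁.prod Q₂) v) = ι Q₁ v.1 ⊗ₜ ω + 1 ⊗ₜ ι Q₂ v.2 :=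
  lift_ι_apply _ _ _

theorem prodToTensor_comp_map_inr :
    (prodToTensor Q₁ hω_mul_self hω_anticomm).comp (map inr) =
      Algebra.TensorProduct.includeRight := by
  ext y
  simp [prodToTensor_ι]

end

theorem commute_map_inl_ι_map_inr (hω_even : ω ∈ evenOdd Q₂ 0) (m : M₁) :
    Commute (map inl (ι Q₁ m)) (map inr ω) :=
  commute_map_mul_map_of_isOrtho_of_mem_evenOdd_zero_right _ _ QuadraticMap.IsOrtho.inl_inr _ _
    (ι_mem_evenOdd_one Q₁ m) hω_even

section

variable (hω_even : ω ∈ evenOdd Q₂ 0) (hω_mul_self : ω * ω = 1)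

def twistedMapInl : CliffordAlgebra Q₁ →ₐ[R] CliffordAlgebra (Q₁.prod Q₂) :=
  lift Q₁ ⟨LinearMap.mulRight R (map inr ω) ∘ₗ (map inl).toLinearMap ∘ₗ ι Q₁, fun m => by
    simp only [LinearMap.comp_apply, LinearMap.mulRight_apply, AlgHom.toLinearMap_apply]
    rw [(commute_map_inl_ι_map_inr Q₁ hω_even m).symm.mul_mul_mul_comm, ← map_mul (map inl),
      ← map_mul (map inr), hω_mul_self, ι_sq_scalar, map_one, mul_one, AlgHom.commutes]⟩

theorem twistedMapInl_ι (m : M₁) :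
    twistedMapInl Q₁ hω_even hω_mul_self (ι Q₁ m) = map inl (ι Q₁ m) * map inr ω :=
  lift_ι_apply _ _ _

theorem commute_twistedMapInl_map_inr (hω_anticomm : ∀ y, ω * ι Q₂ y = -(ι Q₂ y * ω))
    (x : CliffordAlgebra Q₁) (y : CliffordAlgebra Q₂) :
    Commute (twistedMapInl Q₁ hω_even hω_mul_self x) (map inr y) := by
  refine (commute_of_forall_commute_ι _ (fun m => ?_) x).symm
  refine (commute_of_forall_commute_ι _ (fun y' => ?_) y).symm
  have hinl : map inl (ι Q₁ m) * map inr (ι Q₂ y') = -(map inr (ι Q₂ y') * map inl (ι Q₁ m)) := by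
    rw [map_mul_map_eq_neg_of_isOrtho_of_mem_evenOdd_one _ _ QuadraticMap.IsOrtho.inl_inr _ _
      (ι_mem_evenOdd_one Q₁ m) (ι_mem_evenOdd_one Q₂ y'), neg_mul]
  have hinr : map inr ω * map inr (ι Q₂ y') = -(map inr (ι Q₂ y') * map inr ω) := by
    rw [← map_mul, hω_anticomm, map_neg, map_mul]
  rw [twistedMapInl_ι, Commute, SemiconjBy, mul_assoc, hinr, mul_neg, ← mul_assoc, hinl, neg_mul,
    neg_neg, mul_assoc]

variable (hω_anticomm : ∀ y, ω * ι Q₂ y = -(ι Q₂ y * ω))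

def tensorToProd :
    CliffordAlgebra Q₁ ⊗[R] CliffordAlgebra Q₂ →ₐ[R] CliffordAlgebra (Q₁.prod Q₂) :=
  Algebra.TensorProduct.lift (twistedMapInl Q₁ hω_even hω_mul_self) (map inr)
    (commute_twistedMapInl_map_inr Q₁ hω_even hω_mul_self hω_anticomm)

theorem tensorToProd_comp_prodToTensor :
    (tensorToProd Q₁ hω_even hω_mul_self hω_anticomm).comp
      (prodToTensor Q₁ hω_mul_self hω_anticomm) = AlgHom.id R _ := by
  refine CliffordAlgebra.hom_ext (LinearMap.ext fun v => ?_)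
  rw [LinearMap.comp_apply, AlgHom.toLinearMap_apply, AlgHom.comp_apply, prodToTensor_ι, map_add,
    tensorToProd, Algebra.TensorProduct.lift_tmul, Algebra.TensorProduct.lift_tmul,
    twistedMapInl_ι, map_one, one_mul, mul_assoc, ← map_mul, hω_mul_self, map_one, mul_one,
    map_apply_ι, map_apply_ι, ← map_add]
  simp only [QuadraticMap.Isometry.inl_apply, QuadraticMap.Isometry.inr_apply, Prod.mk_add_mk,
    add_zero, zero_add, AlgHom.toLinearMap_id, LinearMap.id_comp]

theorem prodToTensor_comp_twistedMapInl :
    (prodToTensor Q₁ hω_mul_self hω_anticomm).comp (twistedMapInl Q₁ hω_even hω_mul_self) =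
      Algebra.TensorProduct.includeLeft := by
  have hinr := AlgHom.congr_fun (prodToTensor_comp_map_inr Q₁ hω_mul_self hω_anticomm) ω
  rw [AlgHom.comp_apply] at hinr
  ext m
  simp [twistedMapInl_ι, map_apply_ι, prodToTensor_ι, hinr, hω_mul_self]

theorem prodToTensor_comp_tensorToProd :
    (prodToTensor Q₁ hω_mul_self hω_anticomm).comp
      (tensorToProd Q₁ hω_even hω_mul_self hω_anticomm) = AlgHom.id R _ := by
  refine Algebra.TensorProduct.ext' fun x y => ?_
  have hinl :=
    AlgHom.congr_fun (prodToTensor_comp_twistedMapInl Q₁ hω_even hω_mul_self hω_anticomm) x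
  have hinr := AlgHom.congr_fun (prodToTensor_comp_map_inr Q₁ hω_mul_self hω_anticomm) y
  rw [AlgHom.comp_apply] at hinl hinr
  rw [AlgHom.comp_apply, tensorToProd, Algebra.TensorProduct.lift_tmul, map_mul, hinl, hinr]
  simp only [Algebra.TensorProduct.includeLeft_apply, Algebra.TensorProduct.includeRight_apply,
    Algebra.TensorProduct.tmul_mul_tmul, mul_one, one_mul, AlgHom.coe_id, id_eq]

def prodEquivTensor :
    CliffordAlgebra (Q₁.prod Q₂) ≃ₐ[R] CliffordAlgebra Q₁ ⊗[R] CliffordAlgebra Q₂ :=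
  AlgEquiv.ofAlgHom (prodToTensor Q₁ hω_mul_self hω_anticomm)
    (tensorToProd Q₁ hω_even hω_mul_self hω_anticomm)
    (prodToTensor_comp_tensorToProd Q₁ hω_even hω_mul_self hω_anticomm)
    (tensorToProd_comp_prodToTensor Q₁ hω_even hω_mul_self hω_anticomm)

end

open QuadraticMap CliffordAlgebraQuaternion in
def sumSquaresEquivMatrix [Invertible (2 : R)] {u : R} (hu : u * u = -1) :
    (n : ℕ) → CliffordAlgebra (sumSquares R (2 * n)) ≃ₐ[R] Matrix (Fin (2 ^ n)) (Fin (2 ^ n)) R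
  | 0 => (equivOfSubsingleton (M := Fin 0 → R) _).trans (Matrix.finOneAlgEquiv R)
  | n + 1 =>
    have hu' : u * u * (1 * 1) = -1 := by simpa using hu
    (equivOfIsometry (sumSquaresIsometryEquivProd (2 * n))).trans <|
      (prodEquivTensor _ (volume_mem_evenOdd_zero u) (volume_mul_self hu')
        (volume_mul_ι u)).trans <|
      (Algebra.TensorProduct.congr (sumSquaresEquivMatrix hu n)
        (CliffordAlgebraQuaternion.equiv.trans QuaternionAlgebra.splitEquivMatrix)).trans <|
      (Matrix.kroneckerAlgEquiv _ _ R).trans (Matrix.reindexAlgEquiv R R finProdFinEquiv)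

end CliffordAlgebra

end

theorem stmt6 (n : ℕ) (q : QuadraticForm ℂ (Fin (2 * n) → ℂ))
    (hq : ∀ x, q x = ∑ i, x i ^ 2) :
    Nonempty (CliffordAlgebra q ≃ₐ[ℂ] Matrix (Fin (2 ^ n)) (Fin (2 ^ n)) ℂ) := by
  obtain rfl : q = QuadraticMap.sumSquares ℂ (2 * n) :=
    QuadraticMap.ext fun x => (hq x).trans (QuadraticMap.sumSquares_apply x).symm
  exact ⟨CliffordAlgebra.sumSquaresEquivMatrix Complex.I_mul_I n⟩
end

section
/- Let q be the standard quadratic form on ℂ^(2n+1). Then the Clifford algebra Cl(q) is isomorphic as a ℂ-algebra to Mat_{2ⁿ}(ℂ) × Mat_{2ⁿ}(ℂ). -/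
/-!
Brauer–Weyl construction. If `γ₁, …, γₚ` (`p` odd) are anticommuting involutions generating
`Mₘ(ℂ)`, then `γᵢ ⊗ σₓ, 1 ⊗ σ_y, 1 ⊗ σ_z` are `p + 2` anticommuting involutions generating
`Mₘ(ℂ) ⊗ M₂(ℂ)`, and the ordered product of the family (its volume element) gets multiplied by
`σₓ σ_y σ_z = i`. Starting from `1 ∈ M₁(ℂ)` this gives `2n + 1` such generators of `M_{2ⁿ}(ℂ)` with
volume element `iⁿ`.

Sending `eᵢ ↦ (γᵢ, -γᵢ)` defines `Cl(q) → M_{2ⁿ}(ℂ) × M_{2ⁿ}(ℂ)`. Since the volume element has odd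
length, its image is `iⁿ (1, -1)`; together with the diagonal copy of `M_{2ⁿ}(ℂ)` this spans the
product, so the map is onto. Both sides have dimension `2^(2n+1)` (`Cl(q)` is linearly isomorphic
to the exterior algebra), hence it is an isomorphism.
-/

open Matrix Kronecker Complex

structure IsCliffordFamily {ι A : Type*} [Ring A] (γ : ι → A) : Prop where
  mul_self : ∀ i, γ i * γ i = 1
  anticomm : ∀ i j, i ≠ j → γ i * γ j + γ j * γ i = 0

namespace IsCliffordFamily

variable {ι κ A B : Type*} [Ring A] [Ring B] {γ : ι → A}

theorem comp (hγ : IsCliffordFamily γ) {e : κ → ι} (he : Function.Injective e) :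
    IsCliffordFamily (γ ∘ e) :=
  ⟨fun i => hγ.mul_self (e i), fun _ _ hij => hγ.anticomm _ _ (he.ne hij)⟩

theorem map (hγ : IsCliffordFamily γ) {F : Type*} [FunLike F A B] [RingHomClass F A B] (f : F) :
    IsCliffordFamily (f ∘ γ) :=
  ⟨fun i => by simp [← map_mul, hγ.mul_self],
    fun i j hij => by simp [← map_mul, ← map_add, hγ.anticomm i j hij]⟩

theorem neg (hγ : IsCliffordFamily γ) : IsCliffordFamily (-γ) :=
  ⟨fun i => by simp [hγ.mul_self], fun i j hij => by simp [hγ.anticomm i j hij]⟩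

theorem prodMk (hγ : IsCliffordFamily γ) {δ : ι → B} (hδ : IsCliffordFamily δ) :
    IsCliffordFamily fun i => (γ i, δ i) :=
  ⟨fun i => Prod.ext (hγ.mul_self i) (hδ.mul_self i),
    fun i j hij => Prod.ext (hγ.anticomm i j hij) (hδ.anticomm i j hij)⟩

variable {R : Type*} [CommRing R] [Algebra R A]

theorem sum_smul_mul_self (hγ : IsCliffordFamily γ) (x : ι → R) (s : Finset ι) :
    (∑ i ∈ s, x i • γ i) * (∑ i ∈ s, x i • γ i) = algebraMap R A (∑ i ∈ s, x i ^ 2) := by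
  classical
  induction s using Finset.induction_on with
  | empty => simp
  | insert a s ha ih =>
    set S := ∑ i ∈ s, x i • γ i
    have hanti : γ a * S + S * γ a = 0 := by
      rw [Finset.mul_sum, Finset.sum_mul, ← Finset.sum_add_distrib]
      refine Finset.sum_eq_zero fun i hi => ?_
      rw [mul_smul_comm, smul_mul_assoc, ← smul_add,
        hγ.anticomm a i (ne_of_mem_of_not_mem hi ha).symm, smul_zero]
    rw [Finset.sum_insert ha, Finset.sum_insert ha, map_add, ← ih]
    calc (x a • γ a + S) * (x a • γ a + S)
        = (x a * x a) • (γ a * γ a) + x a • (γ a * S + S * γ a) + S * S := by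
          simp only [add_mul, mul_add, smul_mul_assoc, mul_smul_comm, mul_smul,
            smul_add]
          abel
      _ = algebraMap R A (x a ^ 2) + S * S := by
          rw [hγ.mul_self, hanti, smul_zero, add_zero, Algebra.algebraMap_eq_smul_one, sq]

variable [Fintype ι]

noncomputable def lift (hγ : IsCliffordFamily γ) (q : QuadraticForm R (ι → R))
    (hq : ∀ x, q x = ∑ i, x i ^ 2) : CliffordAlgebra q →ₐ[R] A :=
  CliffordAlgebra.lift q ⟨Fintype.linearCombination R γ, fun x => by
    rw [hq, Fintype.linearCombination_apply, hγ.sum_smul_mul_self]⟩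

theorem lift_ι_single [DecidableEq ι] (hγ : IsCliffordFamily γ) (q : QuadraticForm R (ι → R))
    (hq : ∀ x, q x = ∑ i, x i ^ 2) (i : ι) :
    hγ.lift q hq (CliffordAlgebra.ι q (Pi.single i 1)) = γ i := by
  rw [lift, CliffordAlgebra.lift_ι_apply]
  simp

theorem lift_surjective (hγ : IsCliffordFamily γ) (q : QuadraticForm R (ι → R))
    (hq : ∀ x, q x = ∑ i, x i ^ 2) (hgen : Algebra.adjoin R (Set.range γ) = ⊤) :
    Function.Surjective (hγ.lift q hq) := by
  classical
  rw [← AlgHom.range_eq_top, eq_top_iff, ← hgen, Algebra.adjoin_le_iff]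
  rintro _ ⟨i, rfl⟩
  exact ⟨_, hγ.lift_ι_single q hq i⟩

end IsCliffordFamily

theorem CliffordAlgebra.finiteDimensional {K V : Type*} [Field K] [Invertible (2 : K)]
    [AddCommGroup V] [Module K V] [FiniteDimensional K V] (Q : QuadraticForm K V) :
    FiniteDimensional K (CliffordAlgebra Q) :=
  have := Module.Finite.of_basis (Module.finBasis K V).ExteriorAlgebra
  Module.Finite.equiv (CliffordAlgebra.equivExterior Q).symm

theorem CliffordAlgebra.finrank_eq {K V : Type*} [Field K] [Invertible (2 : K)]
    [AddCommGroup V] [Module K V] [FiniteDimensional K V] (Q : QuadraticForm K V) :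
    Module.finrank K (CliffordAlgebra Q) = 2 ^ Module.finrank K V := by
  rw [(CliffordAlgebra.equivExterior Q).finrank_eq,
    Module.finrank_eq_card_basis (Module.finBasis K V).ExteriorAlgebra, Fintype.card_finset,
    Fintype.card_fin]

theorem List.prod_map_prodMk_neg {A ι : Type*} [Ring A] (γ : ι → A) (l : List ι) :
    (l.map fun i => (γ i, -γ i)).prod = ((l.map γ).prod, (l.map γ).prod * (-1) ^ l.length) := by
  induction l with
  | nil => simp [Prod.one_eq_mk]
  | cons i l ih => simp [ih, pow_succ, mul_assoc]

theorem Algebra.adjoin_range_prodMk_neg_eq_top {K A ι : Type*} [Field K] [Invertible (2 : K)]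
    [Ring A] [Algebra K A] {γ : ι → A} (hgen : Algebra.adjoin K (Set.range γ) = ⊤)
    {l : List ι} (hl : Odd l.length) {c : K} (hc : c ≠ 0)
    (hω : (l.map γ).prod = algebraMap K A c) :
    Algebra.adjoin K (Set.range fun i => (γ i, -γ i)) = ⊤ := by
  set T := Algebra.adjoin K (Set.range fun i => (γ i, -γ i))
  have hpair (i : ι) : (γ i, -γ i) ∈ T := Algebra.subset_adjoin ⟨i, rfl⟩
  have hs : ((1, -1) : A × A) ∈ T := by
    have hw : (l.map fun i => (γ i, -γ i)).prod ∈ T :=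
      T.list_prod_mem (by simpa using fun i _ => hpair i)
    rw [List.prod_map_prodMk_neg, hω, hl.neg_one_pow] at hw
    have := T.mul_mem (T.algebraMap_mem c⁻¹) hw
    simpa [Prod.ext_iff, ← map_mul, inv_mul_cancel₀ hc] using this
  have hdiag (a : A) : (a, a) ∈ T := by
    have hle : Algebra.adjoin K (Set.range γ) ≤
        T.comap ((AlgHom.id K A).prod (AlgHom.id K A)) := by
      rw [Algebra.adjoin_le_iff]
      rintro _ ⟨i, rfl⟩
      simpa using T.mul_mem hs (hpair i)
    exact hle (hgen ▸ Algebra.mem_top)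
  refine Algebra.eq_top_iff.2 fun ⟨a, b⟩ => ?_
  have : ((a + b, a + b) + (1, -1) * (a - b, a - b) : A × A) = (2 : K) • (a, b) := by
    ext
    · simp [two_smul]
    · simp [two_smul]
      abel
  rw [← one_smul K (a, b), ← invOf_mul_self (2 : K), mul_smul, ← this]
  exact T.smul_mem (T.add_mem (hdiag _) (T.mul_mem hs (hdiag _))) _

structure IsGeneratingCliffordFamily (K : Type*) {A : Type*} [CommRing K] [Ring A] [Algebra K A]
    {p : ℕ} (γ : Fin p → A) (c : K) : Prop where
  isCliffordFamily : IsCliffordFamily γ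
  adjoin_eq_top : Algebra.adjoin K (Set.range γ) = ⊤
  ofFn_prod : (List.ofFn γ).prod = algebraMap K A c

theorem IsGeneratingCliffordFamily.map {K A B : Type*} [CommRing K] [Ring A] [Algebra K A]
    [Ring B] [Algebra K B] {p : ℕ} {γ : Fin p → A} {c : K}
    (h : IsGeneratingCliffordFamily K γ c) (e : A ≃ₐ[K] B) :
    IsGeneratingCliffordFamily K (e ∘ γ) c where
  isCliffordFamily := h.isCliffordFamily.map e
  adjoin_eq_top := by
    rw [Set.range_comp, ← AlgEquiv.coe_toAlgHom, Algebra.adjoin_image, h.adjoin_eq_top,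
      Algebra.map_top, AlgHom.range_eq_top]
    exact e.surjective
  ofFn_prod := by rw [← List.map_ofFn, ← map_list_prod, h.ofFn_prod, AlgEquiv.commutes]

namespace Matrix

variable {R m n : Type*} [CommRing R] [Fintype m] [DecidableEq m] [Fintype n] [DecidableEq n]

variable (R m n) in
def kroneckerOneAlgHom : Matrix m m R →ₐ[R] Matrix (m × n) (m × n) R where
  toFun A := A ⊗ₖ 1
  map_one' := one_kronecker_one
  map_mul' A B := by rw [← mul_kronecker_mul, mul_one]
  map_zero' := zero_kronecker _
  map_add' A B := add_kronecker _ _ _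
  commutes' r := by simp [Algebra.algebraMap_eq_smul_one, smul_kronecker]

variable (R m n) in
def oneKroneckerAlgHom : Matrix n n R →ₐ[R] Matrix (m × n) (m × n) R where
  toFun B := 1 ⊗ₖ B
  map_one' := one_kronecker_one
  map_mul' A B := by rw [← mul_kronecker_mul, mul_one]
  map_zero' := kronecker_zero _
  map_add' A B := kronecker_add _ _ _
  commutes' r := by simp [Algebra.algebraMap_eq_smul_one, kronecker_smul]

theorem subalgebra_eq_top_of_kronecker_mem {T : Subalgebra R (Matrix (m × n) (m × n) R)}
    (hleft : ∀ A : Matrix m m R, A ⊗ₖ 1 ∈ T) (hright : ∀ B : Matrix n n R, 1 ⊗ₖ B ∈ T) :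
    T = ⊤ := by
  refine Algebra.eq_top_iff.2 fun M => ?_
  rw [matrix_eq_sum_single M]
  refine T.sum_mem fun ⟨a, i⟩ _ => T.sum_mem fun ⟨b, j⟩ _ => ?_
  rw [← mul_one (M _ _), ← single_kronecker_single, ← mul_one (single a b _),
    ← one_mul (single i j _), mul_kronecker_mul]
  exact T.mul_mem (hleft _) (hright _)

theorem ofFn_prod_kronecker {p : ℕ} (γ : Fin p → Matrix m m R) (B : Matrix n n R) :
    (List.ofFn fun i => γ i ⊗ₖ B).prod = (List.ofFn γ).prod ⊗ₖ (B ^ p) := by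
  induction p with
  | zero => simp
  | succ p ih => rw [List.ofFn_succ, List.prod_cons, ih, ← mul_kronecker_mul, List.ofFn_succ,
      List.prod_cons, pow_succ']

theorem ofFn_prod_one_kronecker {p : ℕ} (γ : Fin p → Matrix n n R) :
    (List.ofFn fun i => (1 : Matrix m m R) ⊗ₖ γ i).prod = 1 ⊗ₖ (List.ofFn γ).prod := by
  change (List.ofFn (oneKroneckerAlgHom R m n ∘ γ)).prod = oneKroneckerAlgHom R m n _
  rw [← List.map_ofFn, map_list_prod]

end Matrix

section KroneckerExtend

variable {R m n ι : Type*} [CommRing R] [Fintype m] [DecidableEq m] [Fintype n] [DecidableEq n]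

def kroneckerExtend (γ : ι → Matrix m m R) {k : ℕ} (δ : Fin (k + 1) → Matrix n n R) :
    ι ⊕ Fin k → Matrix (m × n) (m × n) R :=
  Sum.elim (fun i => γ i ⊗ₖ δ 0) (fun j => 1 ⊗ₖ δ j.succ)

variable {γ : ι → Matrix m m R} {k : ℕ} {δ : Fin (k + 1) → Matrix n n R}

theorem IsCliffordFamily.kroneckerExtend (hγ : IsCliffordFamily γ) (hδ : IsCliffordFamily δ) :
    IsCliffordFamily (kroneckerExtend γ δ) := by
  have hcross (i : ι) (j : Fin k) :
      (γ i ⊗ₖ δ 0) * (1 ⊗ₖ δ j.succ) + (1 ⊗ₖ δ j.succ) * (γ i ⊗ₖ δ 0) = 0 := by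
    rw [← mul_kronecker_mul, ← mul_kronecker_mul, mul_one, one_mul, ← kronecker_add,
      hδ.anticomm _ _ (Fin.succ_ne_zero j).symm, kronecker_zero]
  constructor
  · rintro (i | j) <;>
      simp [_root_.kroneckerExtend, ← mul_kronecker_mul, hγ.mul_self, hδ.mul_self]
  · rintro (i | i) (j | j) hij
    · simp only [_root_.kroneckerExtend, Sum.elim_inl, ← mul_kronecker_mul, ← add_kronecker,
        hγ.anticomm i j (by simpa using hij), zero_kronecker]
    · exact hcross i j
    · rw [add_comm]
      exact hcross j i
    · simp only [_root_.kroneckerExtend, Sum.elim_inr, ← mul_kronecker_mul, ← kronecker_add,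
        hδ.anticomm _ _ ((Fin.succ_injective _).ne (by simpa using hij)), kronecker_zero]

theorem adjoin_range_kroneckerExtend_eq_top (hγ : Algebra.adjoin R (Set.range γ) = ⊤)
    (hδ : Algebra.adjoin R (Set.range (δ ∘ Fin.succ)) = ⊤) (hδ₀ : δ 0 * δ 0 = 1) :
    Algebra.adjoin R (Set.range (kroneckerExtend γ δ)) = ⊤ := by
  set T := Algebra.adjoin R (Set.range (kroneckerExtend γ δ))
  have hright (B : Matrix n n R) : 1 ⊗ₖ B ∈ T := by
    have : Algebra.adjoin R (Set.range (δ ∘ Fin.succ)) ≤ T.comap (oneKroneckerAlgHom R m n) := by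
      rw [Algebra.adjoin_le_iff]
      rintro _ ⟨j, rfl⟩
      exact Algebra.subset_adjoin ⟨Sum.inr j, rfl⟩
    exact this (hδ ▸ Algebra.mem_top)
  have hleft (A : Matrix m m R) : A ⊗ₖ 1 ∈ T := by
    have : Algebra.adjoin R (Set.range γ) ≤ T.comap (kroneckerOneAlgHom R m n) := by
      rw [Algebra.adjoin_le_iff]
      rintro _ ⟨i, rfl⟩
      have := T.mul_mem (Algebra.subset_adjoin ⟨Sum.inl i, rfl⟩) (hright (δ 0))
      rwa [_root_.kroneckerExtend, Sum.elim_inl, ← mul_kronecker_mul, mul_one, hδ₀] at this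
    exact this (hγ ▸ Algebra.mem_top)
  exact subalgebra_eq_top_of_kronecker_mem hleft hright

theorem ofFn_prod_kroneckerExtend {p : ℕ} (hp : Odd p) {γ : Fin p → Matrix m m R}
    (hδ₀ : δ 0 * δ 0 = 1) :
    (List.ofFn (kroneckerExtend γ δ ∘ finSumFinEquiv.symm)).prod =
      (List.ofFn γ).prod ⊗ₖ (List.ofFn δ).prod := by
  have hinl (i : Fin p) : finSumFinEquiv.symm (Fin.castLE (Nat.le_add_right p k) i) = Sum.inl i :=
    finSumFinEquiv_symm_apply_castAdd i
  rw [List.ofFn_add, List.prod_append]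
  simp only [Function.comp_apply, hinl, finSumFinEquiv_symm_apply_natAdd, _root_.kroneckerExtend,
    Sum.elim_inl, Sum.elim_inr]
  obtain ⟨r, rfl⟩ := hp
  rw [ofFn_prod_kronecker, ofFn_prod_one_kronecker, ← mul_kronecker_mul, mul_one,
    List.ofFn_succ (f := δ), List.prod_cons, pow_succ, pow_mul, sq, hδ₀, one_pow, one_mul]

theorem IsGeneratingCliffordFamily.kroneckerExtend {p : ℕ} (hp : Odd p)
    {γ : Fin p → Matrix m m R} {c d : R} (hγ : IsGeneratingCliffordFamily R γ c)
    (hδ : IsCliffordFamily δ)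
    (hδgen : Algebra.adjoin R (Set.range (δ ∘ Fin.succ)) = ⊤)
    (hδvol : (List.ofFn δ).prod = algebraMap R _ d) :
    IsGeneratingCliffordFamily R (kroneckerExtend γ δ ∘ finSumFinEquiv.symm) (c * d) where
  isCliffordFamily :=
    (hγ.isCliffordFamily.kroneckerExtend hδ).comp finSumFinEquiv.symm.injective
  adjoin_eq_top := by
    rw [finSumFinEquiv.symm.surjective.range_comp]
    exact adjoin_range_kroneckerExtend_eq_top hγ.adjoin_eq_top hδgen (hδ.mul_self 0)
  ofFn_prod := by
    rw [ofFn_prod_kroneckerExtend hp (hδ.mul_self 0), hγ.ofFn_prod, hδvol]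
    simp [Algebra.algebraMap_eq_smul_one, smul_kronecker, kronecker_smul, smul_smul, mul_comm]

end KroneckerExtend

def pauli : Fin 3 → Matrix (Fin 2) (Fin 2) ℂ :=
  ![!![0, 1; 1, 0], !![0, -I; I, 0], !![1, 0; 0, -1]]

theorem isCliffordFamily_pauli : IsCliffordFamily pauli := by
  constructor
  · intro i
    fin_cases i <;> simp [pauli, one_fin_two]
  · intro i j hij
    fin_cases i <;> fin_cases j <;> simp_all [pauli, ← Matrix.ext_iff, Fin.forall_fin_two]

theorem adjoin_range_pauli_succ : Algebra.adjoin ℂ (Set.range (pauli ∘ Fin.succ)) = ⊤ := by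
  set T := Algebra.adjoin ℂ (Set.range (pauli ∘ Fin.succ))
  have hY : pauli 1 ∈ T := Algebra.subset_adjoin ⟨0, rfl⟩
  have hZ : pauli 2 ∈ T := Algebra.subset_adjoin ⟨1, rfl⟩
  refine Algebra.eq_top_iff.2 fun M => ?_
  have : M = ((M 0 0 + M 1 1) / 2) • 1 + (I * (M 0 1 - M 1 0) / 2) • pauli 1 +
      ((M 0 0 - M 1 1) / 2) • pauli 2 + (-I * (M 0 1 + M 1 0) / 2) • (pauli 1 * pauli 2) := by
    ext i j
    fin_cases i <;> fin_cases j <;> simp [pauli] <;> ring_nf <;> simp [I_sq]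
  rw [this]
  exact T.add_mem (T.add_mem (T.add_mem (T.smul_mem T.one_mem _) (T.smul_mem hY _))
    (T.smul_mem hZ _)) (T.smul_mem (T.mul_mem hY hZ) _)

theorem ofFn_prod_pauli : (List.ofFn pauli).prod = algebraMap ℂ _ I := by
  ext i j
  fin_cases i <;> fin_cases j <;> simp [pauli, List.ofFn_succ, Algebra.algebraMap_eq_smul_one]

theorem exists_isGeneratingCliffordFamily_matrix (n : ℕ) :
    ∃ γ : Fin (2 * n + 1) → Matrix (Fin (2 ^ n)) (Fin (2 ^ n)) ℂ,
      IsGeneratingCliffordFamily ℂ γ (I ^ n) := by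
  induction n with
  | zero =>
    refine ⟨fun _ => 1, ⟨⟨fun _ => mul_one 1, fun i j hij =>
      absurd (Subsingleton.elim (α := Fin 1) i j) hij⟩, Algebra.eq_top_iff.2 fun M => ?_, by simp⟩⟩
    have : M = algebraMap ℂ _ (M 0 0) := by
      ext i j
      simp [Subsingleton.elim (α := Fin 1) i 0, Subsingleton.elim (α := Fin 1) j 0,
        algebraMap_matrix_apply]
    exact this ▸ Subalgebra.algebraMap_mem _ _
  | succ n ih =>
    obtain ⟨γ, hγ⟩ := ih
    exact ⟨_, ((hγ.kroneckerExtend (odd_two_mul_add_one n) isCliffordFamily_pauli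
      adjoin_range_pauli_succ ofFn_prod_pauli).map (reindexAlgEquiv ℂ ℂ finProdFinEquiv))⟩

theorem stmt7 (n : ℕ) (q : QuadraticForm ℂ (Fin (2 * n + 1) → ℂ))
    (hq : ∀ x, q x = ∑ i, x i ^ 2) :
    Nonempty (CliffordAlgebra q ≃ₐ[ℂ]
      (Matrix (Fin (2 ^ n)) (Fin (2 ^ n)) ℂ × Matrix (Fin (2 ^ n)) (Fin (2 ^ n)) ℂ)) := by
  obtain ⟨γ, hγ⟩ := exists_isGeneratingCliffordFamily_matrix n
  have hpair := hγ.isCliffordFamily.prodMk hγ.isCliffordFamily.neg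
  have hsurj : Function.Surjective (hpair.lift q hq) := by
    refine hpair.lift_surjective q hq (Algebra.adjoin_range_prodMk_neg_eq_top hγ.adjoin_eq_top
      (l := List.finRange _) (by simp) (pow_ne_zero n I_ne_zero) ?_)
    rw [← List.ofFn_eq_map, hγ.ofFn_prod]
  have hdim : Module.finrank ℂ (CliffordAlgebra q) = Module.finrank ℂ
      (Matrix (Fin (2 ^ n)) (Fin (2 ^ n)) ℂ × Matrix (Fin (2 ^ n)) (Fin (2 ^ n)) ℂ) := by
    rw [CliffordAlgebra.finrank_eq, Module.finrank_fin_fun, Module.finrank_prod,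
      Module.finrank_matrix, Module.finrank_self, Fintype.card_fin]
    ring
  have := CliffordAlgebra.finiteDimensional q
  exact ⟨AlgEquiv.ofBijective _
    ⟨(LinearMap.injective_iff_surjective_of_finrank_eq_finrank hdim
      (f := (hpair.lift q hq).toLinearMap)).2 hsurj, hsurj⟩⟩
end
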